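/- Let (E,E') be a dual pair. Then the weak fuzzy topology σ_f(E,E') on E coincides with w(σ(E,E')), the fuzzy topology of all functions E → [0,1] that are lower semicontinuous with respect to the classical weak topology σ(E,E'). -/

import Mathlib

open Set

/-- A fuzzy topology on `E`: a family of `[0,1]`-valued "fuzzy open" functions containing all
constants in `[0,1]`, and closed under binary pointwise minima and arbitrary pointwise suprema. -/
structure FuzzyTopology (E : Type*) where
  IsOpen : (E → ℝ) → Prop
  unit : ∀ μ, IsOpen μ → ∀ x, μ x ∈ Set.Icc (0:ℝ) 1
  isOpen_const : ∀ c ∈ Set.Icc (0:ℝ) 1, IsOpen fun _ => c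
  isOpen_min : ∀ μ ν, IsOpen μ → IsOpen ν → IsOpen fun x => min (μ x) (ν x)
  isOpen_sSup : ∀ S : Set (E → ℝ), (∀ μ ∈ S, IsOpen μ) → IsOpen fun x => ⨆ μ ∈ S, μ x

/-- `(E, E')` is a dual pair: the pairing separates points on both sides. -/
def IsDualPair {E E' : Type*} [AddCommGroup E] [Module ℝ E] [AddCommGroup E'] [Module ℝ E']
    (B : E →ₗ[ℝ] E' →ₗ[ℝ] ℝ) : Prop :=
  (∀ x : E, x ≠ 0 → ∃ x' : E', B x x' ≠ 0) ∧ (∀ x' : E', x' ≠ 0 → ∃ x : E, B x x' ≠ 0)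

/-- Pointwise minimum of two real-valued lower semicontinuous functions is LSC. -/
lemma lsc_min_aux {X : Type*} [TopologicalSpace X] {f g : X → ℝ}
    (hf : LowerSemicontinuous f) (hg : LowerSemicontinuous g) :
    LowerSemicontinuous fun x => min (f x) (g x) := by
  intro x c hc
  filter_upwards [hf x c (lt_of_lt_of_le hc (min_le_left _ _)),
    hg x c (lt_of_lt_of_le hc (min_le_right _ _))] with y h1 h2
  exact lt_min h1 h2

lemma biSup_le_aux {ι : Type*} {S : Set ι} {f : ι → ℝ} {a : ℝ} (ha : 0 ≤ a)
    (h : ∀ i ∈ S, f i ≤ a) : (⨆ i ∈ S, f i) ≤ a :=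
  Real.iSup_le (fun i => Real.iSup_le (h i) ha) ha

lemma biSup_nonneg_aux {ι : Type*} {S : Set ι} {f : ι → ℝ}
    (h : ∀ i ∈ S, 0 ≤ f i) : 0 ≤ ⨆ i ∈ S, f i :=
  Real.iSup_nonneg fun i => Real.iSup_nonneg fun hi => h i hi

lemma le_biSup_aux {ι : Type*} {S : Set ι} {f : ι → ℝ} (hb : ∀ i ∈ S, f i ≤ 1)
    {i : ι} (hi : i ∈ S) : f i ≤ ⨆ j ∈ S, f j := by
  have h1 : f i ≤ ⨆ _ : i ∈ S, f i :=
    le_ciSup (f := fun _ : i ∈ S => f i) ⟨f i, by rintro _ ⟨_, rfl⟩; exact le_rfl⟩ hi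
  refine h1.trans (le_ciSup (f := fun j => ⨆ _ : j ∈ S, f j) ?_ i)
  refine ⟨1, ?_⟩
  rintro _ ⟨j, rfl⟩
  exact Real.iSup_le (fun hj => hb j hj) zero_le_one

/-- a `[0,1]`-valued `μ` belongs to the weak fuzzy topology `σ_f(E,E')`
(the coarsest fuzzy topology making each `x' ∈ E'` fuzzy continuous into `(ℝ, w(τ_usual))`,
rendered here as membership in every such fuzzy topology) iff `μ` is lower semicontinuous
for the classical weak topology `σ(E,E')`, i.e. `σ_f(E,E') = w(σ(E,E'))`. -/
theorem weakFuzzyTopology_eq {E E' : Type*} [AddCommGroup E] [Module ℝ E]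
    [AddCommGroup E'] [Module ℝ E'] (B : E →ₗ[ℝ] E' →ₗ[ℝ] ℝ) (hB : IsDualPair B)
    (μ : E → ℝ) (hμ : ∀ x, μ x ∈ Icc (0:ℝ) 1) :
    (∀ T : FuzzyTopology E,
        (∀ x' : E', ∀ ν : ℝ → ℝ, (∀ t, ν t ∈ Icc (0:ℝ) 1) → LowerSemicontinuous ν →
          T.IsOpen fun x => ν (B x x')) →
        T.IsOpen μ) ↔
      @LowerSemicontinuous E ℝ
        (⨅ x' : E', TopologicalSpace.induced (fun x => B x x') inferInstance) _ μ := by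
  classical
  set t : TopologicalSpace E :=
    ⨅ x' : E', TopologicalSpace.induced (fun x => B x x') inferInstance with ht
  constructor
  · -- if μ is in every admissible fuzzy topology, then it is LSC for the weak topology
    intro h
    -- the fuzzy topology of weakly-LSC [0,1]-valued functions
    refine (h
      { IsOpen := fun g => (∀ x, g x ∈ Icc (0:ℝ) 1) ∧ @LowerSemicontinuous E ℝ t _ g
        unit := fun g hg => hg.1
        isOpen_const := fun c hc => ⟨fun _ => hc, fun x d hd =>
          Filter.Eventually.of_forall fun _ => hd⟩
        isOpen_min := fun g₁ g₂ h1 h2 =>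
          ⟨fun x => ⟨le_min (h1.1 x).1 (h2.1 x).1, (min_le_left _ _).trans (h1.1 x).2⟩,
            lsc_min_aux h1.2 h2.2⟩
        isOpen_sSup := ?_ } ?_).2
    · intro S hS
      constructor
      · intro x
        constructor
        · exact biSup_nonneg_aux fun g hg => ((hS g hg).1 x).1
        · exact biSup_le_aux zero_le_one fun g hg => ((hS g hg).1 x).2
      · intro x c hc
        rcases lt_or_ge c 0 with hc0 | hc0
        · refine Filter.Eventually.of_forall fun y => lt_of_lt_of_le hc0 ?_
          exact biSup_nonneg_aux fun g hg => ((hS g hg).1 y).1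
        · obtain ⟨g, hg⟩ := exists_lt_of_lt_ciSup hc
          by_cases hgS : g ∈ S
          swap
          · exfalso
            haveI : IsEmpty (g ∈ S) := ⟨hgS⟩
            rw [Real.iSup_of_isEmpty] at hg
            exact absurd (hc0.trans hg.le) (by simpa using hg.trans_le hc0)
          haveI : Nonempty (g ∈ S) := ⟨hgS⟩
          rw [ciSup_const] at hg
          filter_upwards [(hS g hgS).2 x c hg] with y hy
          exact lt_of_lt_of_le hy (le_biSup_aux (fun g' hg' => ((hS g' hg').1 y).2) hgS)
    · intro x' ν hν hlsc
      refine ⟨fun x => hν _, ?_⟩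
      have hcont : @Continuous E ℝ t _ fun x => B x x' :=
        continuous_iInf_dom (continuous_induced_dom (t := inferInstance))
      exact LowerSemicontinuous.comp (f := ν) hlsc hcont
  · -- if μ is LSC for the weak topology, it belongs to every admissible fuzzy topology
    intro hlsc T hT
    -- set of "fuzzy basic" functions below μ
    set S : Set (E → ℝ) := {g | ∃ c : ℝ, c ∈ Icc (0:ℝ) 1 ∧ ∃ (s : Finset E') (V : E' → Set ℝ),
      (∀ x' ∈ s, IsOpen (V x')) ∧ (∀ y, (∀ x' ∈ s, B y x' ∈ V x') → c ≤ μ y) ∧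
      g = fun y => if ∀ x' ∈ s, B y x' ∈ V x' then c else 0} with hSdef
    -- every element of S is fuzzy open in T
    have hSopen : ∀ g ∈ S, T.IsOpen g := by
      rintro g ⟨c, hc, s, V, hVopen, -, rfl⟩
      clear hSdef
      induction s using Finset.induction_on with
      | empty =>
          have : (fun y => if ∀ x' ∈ (∅ : Finset E'), B y x' ∈ V x' then c else 0)
              = fun _ => c := by
            funext y; simp
          rw [this]; exact T.isOpen_const c hc
      | @insert a s ha ih =>
          have hVa : IsOpen (V a) := hVopen a (Finset.mem_insert_self a s)
          have hrest := ih fun x' hx' => hVopen x' (Finset.mem_insert_of_mem hx')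
          have hνopen : T.IsOpen fun y => indicator (V a) (fun _ => c) (B y a) :=
            hT a (indicator (V a) fun _ => c)
              (fun r => by
                by_cases hr : r ∈ V a <;>
                  simp [indicator, hr, hc.1, hc.2, mem_Icc])
              (hVa.lowerSemicontinuous_indicator hc.1)
          have key : (fun y => if ∀ x' ∈ insert a s, B y x' ∈ V x' then c else 0)
              = fun y => min (if ∀ x' ∈ s, B y x' ∈ V x' then c else 0)
                  (indicator (V a) (fun _ => c) (B y a)) := by
            funext y
            by_cases h1 : ∀ x' ∈ s, B y x' ∈ V x' <;> by_cases h2 : B y a ∈ V a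
            · rw [if_pos (show ∀ x' ∈ insert a s, B y x' ∈ V x' from fun x' hx' => by
                rcases Finset.mem_insert.1 hx' with rfl | h
                exacts [h2, h1 x' h]), if_pos h1,
                indicator_of_mem h2, min_self]
            · rw [if_neg fun h => h2 (h a (Finset.mem_insert_self a s)), if_pos h1,
                indicator_of_notMem h2, min_eq_right hc.1]
            · rw [if_neg fun h => h1 fun x' hx' => h x' (Finset.mem_insert_of_mem hx'),
                if_neg h1, indicator_of_mem h2, min_eq_left hc.1]
            · rw [if_neg fun h => h1 fun x' hx' => h x' (Finset.mem_insert_of_mem hx'),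
                if_neg h1, indicator_of_notMem h2, min_self]
          rw [key]
          exact T.isOpen_min _ _ hrest hνopen
    -- μ is the pointwise supremum of S
    have hsup : μ = fun x => ⨆ g ∈ S, g x := by
      funext x
      refine le_antisymm ?_ ?_
      · refine le_of_forall_lt_imp_le_of_dense fun c hc => ?_
        rcases lt_or_ge c 0 with hc0 | hc0
        · refine hc0.le.trans (biSup_nonneg_aux fun g hg => ?_)
          rcases hg with ⟨c', hc', s, V, -, -, rfl⟩
          by_cases hcond : ∀ x' ∈ s, B x x' ∈ V x'
          · simp only [if_pos hcond]; exact hc'.1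
          · simp only [if_neg hcond]; exact le_rfl
        · -- extract a basic weak neighborhood from lower semicontinuity
          have hx : {y | c < μ y} ∈ @nhds E t x := hlsc x c hc
          rw [ht, nhds_iInf, Filter.mem_iInf] at hx
          obtain ⟨I, hIfin, V0, hV0, hEq⟩ := hx
          have hW : ∀ i : I, ∃ W : Set ℝ, IsOpen W ∧ B x (i : E') ∈ W ∧
              (fun y => B y (i : E')) ⁻¹' W ⊆ V0 i := by
            intro i
            have := hV0 i
            rw [nhds_induced, Filter.mem_comap] at this
            obtain ⟨u, hu, hsub⟩ := this
            obtain ⟨W, hWu, hWopen, hWmem⟩ := mem_nhds_iff.1 hu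
            exact ⟨W, hWopen, hWmem, (preimage_mono hWu).trans hsub⟩
          choose W hWopen hWmem hWsub using hW
          set s : Finset E' := hIfin.toFinset with hs
          set V : E' → Set ℝ := fun x' => if h : x' ∈ I then W ⟨x', h⟩ else univ with hV
          have hcond : ∀ y, (∀ x' ∈ s, B y x' ∈ V x') → c < μ y := by
            intro y hy
            have : y ∈ ⋂ i, V0 i := by
              refine mem_iInter.2 fun i => ?_
              have hmem : (i : E') ∈ s := hIfin.mem_toFinset.2 i.2
              have := hy (i : E') hmem
              rw [hV] at this
              simp only [dif_pos i.2] at this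
              exact hWsub i this
            rw [← hEq] at this
            exact this
          have hxcond : ∀ x' ∈ s, B x x' ∈ V x' := by
            intro x' hx'
            have hx'I : x' ∈ I := hIfin.mem_toFinset.1 hx'
            rw [hV]; simp only [dif_pos hx'I]
            exact hWmem ⟨x', hx'I⟩
          -- the basic fuzzy set
          have hcI : c ∈ Icc (0:ℝ) 1 := ⟨hc0, hc.le.trans (hμ x).2⟩
          set g : E → ℝ := fun y => if ∀ x' ∈ s, B y x' ∈ V x' then c else 0 with hg
          have hgS : g ∈ S := ⟨c, hcI, s, V,
            fun x' _ => by
              by_cases h : x' ∈ I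
              · simpa [hV, h] using hWopen ⟨x', h⟩
              · simp [hV, h],
            fun y hy => (hcond y hy).le, rfl⟩
          have hgle1 : ∀ g' ∈ S, g' x ≤ 1 := by
            rintro g' ⟨c', hc', s', V', -, -, rfl⟩
            by_cases hcond' : ∀ x' ∈ s', B x x' ∈ V' x'
            · simp only [if_pos hcond']; exact hc'.2
            · simp only [if_neg hcond']; exact zero_le_one
          have : c = g x := by rw [hg]; exact (if_pos hxcond).symm
          rw [this]
          exact le_biSup_aux hgle1 hgS
      · refine biSup_le_aux (hμ x).1 ?_
        rintro g ⟨c, hc, s, V, -, hle, rfl⟩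
        by_cases hcond : ∀ x' ∈ s, B x x' ∈ V x'
        · simp only [if_pos hcond]; exact hle x hcond
        · simp only [if_neg hcond]; exact (hμ x).1
    rw [hsup]
    exact T.isOpen_sSup S hSopen
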